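/- Let Θ ∈ GL(2,ℤ) be hyperbolic, i.e. det Θ = ±1 and no eigenvalue of Θ is a root of unity (equivalently: if det Θ = 1 then |tr Θ| > 2, and if det Θ = −1 then tr Θ ≠ 0). Then every abelian normal subgroup of π_Θ = ℤ² ⋊_Θ ℤ is contained in the subgroup A = ℤ² × {0}; consequently A is the unique maximal abelian normal subgroup of π_Θ. -/

import Mathlib

/-- The additive automorphism of `ℤ²` given by a matrix `Θ ∈ GL(2,ℤ)`. -/
def thetaAddAut (Θ : GL (Fin 2) ℤ) : (Fin 2 → ℤ) ≃+ (Fin 2 → ℤ) where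
  toFun v := (Θ : Matrix (Fin 2) (Fin 2) ℤ).mulVec v
  invFun v := (Θ⁻¹ : GL (Fin 2) ℤ).1.mulVec v
  left_inv v := by
    simp only [Matrix.mulVec_mulVec, Units.inv_mul, Matrix.one_mulVec]
  right_inv v := by
    simp only [Matrix.mulVec_mulVec, Units.mul_inv, Matrix.one_mulVec]
  map_add' v w := by simpa using Matrix.mulVec_add (Θ : Matrix (Fin 2) (Fin 2) ℤ) v w

/-- `π_Θ = ℤ² ⋊_Θ ℤ`, the semidirect product in which the generator of `ℤ`
acts on `ℤ²` by the matrix `Θ`. -/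
abbrev piTheta (Θ : GL (Fin 2) ℤ) : Type :=
  SemidirectProduct (Multiplicative (Fin 2 → ℤ)) (Multiplicative ℤ)
    (zpowersHom (MulAut (Multiplicative (Fin 2 → ℤ)))
      (AddEquiv.toMultiplicative (thetaAddAut Θ)))


/-- The subgroup `A = ℤ² × {0}` of `π_Θ`. -/
def zSqSubgroup (Θ : GL (Fin 2) ℤ) : Subgroup (piTheta Θ) :=
  (SemidirectProduct.inl : Multiplicative (Fin 2 → ℤ) →* piTheta Θ).range

/-!
For `n ≠ 0` the matrix `Θ ^ n - 1` is nonsingular. Indeed the discriminant `tr² - 4 det` of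
`Θ` is nonnegative, so `Θ` has real eigenvalues `x, y`, and
`det (Θ ^ n - 1) = (x ^ n - 1) (y ^ n - 1)`. A real `n`-th root of unity is `±1`, and `±1` is
not a root of `X² - tr X + det`, which is the condition `tr² ≠ (1 + det)²`.

If an abelian normal subgroup contained `x = (v, n)` with `n ≠ 0` (replace `x` by `x⁻¹` to get
`n > 0`), then `x` would commute with its conjugates `(w + v - Θⁿ w, n)`, which says that
`Θⁿ` fixes `w - Θⁿ w` for every `w ∈ ℤ²`, i.e. `(Θⁿ - 1)² = 0`.
-/

theorem Real.exists_add_eq_and_mul_eq {s p : ℝ} (h : 4 * p ≤ s ^ 2) :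
    ∃ x y : ℝ, x + y = s ∧ x * y = p := by
  refine ⟨(s + √(s ^ 2 - 4 * p)) / 2, (s - √(s ^ 2 - 4 * p)) / 2, by ring, ?_⟩
  have := Real.sq_sqrt (sub_nonneg.mpr h)
  linear_combination -this / 4

theorem sq_add_eq_sq_one_add_mul {R : Type*} [CommRing R] {x y : R} (hx : x ^ 2 = 1) :
    (x + y) ^ 2 = (1 + x * y) ^ 2 := by
  linear_combination (1 - y ^ 2) * hx

namespace Matrix

variable {R : Type*} [CommRing R]

theorem det_sub_one_fin_two (A : Matrix (Fin 2) (Fin 2) R) :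
    (A - 1).det = A.det - A.trace + 1 := by
  simp only [det_fin_two, trace_fin_two, sub_apply, one_apply_eq, one_apply_ne, ne_eq,
    zero_ne_one, one_ne_zero, not_false_eq_true, sub_zero]
  ring

theorem sq_eq_trace_smul_sub_det_smul_fin_two (A : Matrix (Fin 2) (Fin 2) R) :
    A ^ 2 = A.trace • A - A.det • 1 := by
  ext i j
  fin_cases i <;> fin_cases j <;> simp [sq, mul_apply, det_fin_two, trace_fin_two] <;> ring

theorem trace_pow_add_two_fin_two (A : Matrix (Fin 2) (Fin 2) R) (k : ℕ) :
    (A ^ (k + 2)).trace = A.trace * (A ^ (k + 1)).trace - A.det * (A ^ k).trace := by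
  rw [pow_add, sq_eq_trace_smul_sub_det_smul_fin_two, mul_sub, mul_smul_comm, mul_smul_comm,
    mul_one, ← pow_succ, trace_sub, trace_smul, trace_smul, smul_eq_mul, smul_eq_mul]

theorem trace_pow_fin_two_eq (A : Matrix (Fin 2) (Fin 2) R) {x y : R}
    (hsum : x + y = A.trace) (hprod : x * y = A.det) (k : ℕ) :
    (A ^ k).trace = x ^ k + y ^ k := by
  induction k using Nat.twoStepInduction with
  | zero => norm_num
  | one => simp [hsum]
  | more k ih₀ ih₁ =>
    rw [trace_pow_add_two_fin_two, ih₀, ih₁, ← hsum, ← hprod]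
    ring

theorem det_pow_sub_one_fin_two (A : Matrix (Fin 2) (Fin 2) R) {x y : R}
    (hsum : x + y = A.trace) (hprod : x * y = A.det) (n : ℕ) :
    (A ^ n - 1).det = (x ^ n - 1) * (y ^ n - 1) := by
  rw [det_sub_one_fin_two, det_pow, trace_pow_fin_two_eq A hsum hprod, ← hprod]
  ring

theorem det_pow_sub_one_ne_zero (A : Matrix (Fin 2) (Fin 2) ℤ)
    (hdisc : 4 * A.det ≤ A.trace ^ 2) (hroot : A.trace ^ 2 ≠ (1 + A.det) ^ 2)
    {n : ℕ} (hn : n ≠ 0) : (A ^ n - 1).det ≠ 0 := by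
  obtain ⟨x, y, hsum, hprod⟩ :=
    Real.exists_add_eq_and_mul_eq (s := A.trace) (p := A.det) (by exact_mod_cast hdisc)
  have hdet : ((A ^ n - 1).det : ℝ) = (x ^ n - 1) * (y ^ n - 1) := by
    let f := Int.castRingHom ℝ
    have hmap := f.map_det (A ^ n - 1)
    rw [map_sub, map_pow, map_one] at hmap
    rw [← eq_intCast f, hmap]
    exact det_pow_sub_one_fin_two _ (hsum.trans (AddMonoidHom.map_trace f A))
      (hprod.trans (f.map_det A)) n
  have hsq : ∀ z : ℝ, z ^ n = 1 → z ^ 2 = 1 := fun z hz => by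
    obtain h | rfl | ⟨rfl, -⟩ := pow_eq_one_iff_cases.mp hz
    exacts [absurd h hn, one_pow 2, neg_one_sq]
  intro h0
  rw [h0, Int.cast_zero, eq_comm, mul_eq_zero, sub_eq_zero, sub_eq_zero] at hdet
  apply hroot
  apply Int.cast_injective (α := ℝ)
  simp only [Int.cast_pow, Int.cast_add, Int.cast_one]
  rw [← hsum, ← hprod]
  rcases hdet with hx | hy
  · exact sq_add_eq_sq_one_add_mul (hsq x hx)
  · rw [add_comm, mul_comm]
    exact sq_add_eq_sq_one_add_mul (hsq y hy)

theorem det_pow_sub_one_ne_zero_of_hyperbolic (A : Matrix (Fin 2) (Fin 2) ℤ)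
    (h : (A.det = 1 ∧ 2 < |A.trace|) ∨ (A.det = -1 ∧ A.trace ≠ 0)) {n : ℕ} (hn : n ≠ 0) :
    (A ^ n - 1).det ≠ 0 := by
  rcases h with ⟨hd, ht⟩ | ⟨hd, ht⟩
  · have h4 : 4 < A.trace ^ 2 := by nlinarith [sq_abs A.trace]
    exact det_pow_sub_one_ne_zero A (by linarith) (by rw [hd]; norm_num; exact h4.ne') hn
  · exact det_pow_sub_one_ne_zero A (by nlinarith [sq_nonneg A.trace]) (by rw [hd]; simpa) hn

end Matrix

namespace SemidirectProduct
variable {N G : Type*} [CommGroup N] [Group G] {φ : G →* MulAut N}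

theorem map_right_div_eq_of_commute_conj {x : N ⋊[φ] G} {w : N}
    (h : Commute x (inl w * x * (inl w)⁻¹)) :
    φ x.right (w / φ x.right w) = w / φ x.right w := by
  have := congrArg left h.eq
  simp only [mul_left, inv_left, left_inl, right_inl, mul_right, inv_right, inv_one, map_one,
    MulAut.one_apply, one_mul, mul_one, map_inv, map_mul] at this
  rw [map_div, div_eq_div_iff_mul_eq_mul]
  apply Additive.ofMul.injective
  replace this := congrArg Additive.ofMul this
  simp only [ofMul_mul, ofMul_inv] at this ⊢
  rw [← sub_eq_zero] at this ⊢
  convert this using 1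
  abel

end SemidirectProduct

theorem zpowersHom_thetaAddAut_natCast_apply (Θ : GL (Fin 2) ℤ) (n : ℕ) (v : Fin 2 → ℤ) :
    zpowersHom (MulAut (Multiplicative (Fin 2 → ℤ))) (AddEquiv.toMultiplicative (thetaAddAut Θ))
      (Multiplicative.ofAdd (n : ℤ)) (Multiplicative.ofAdd v) =
      Multiplicative.ofAdd (((Θ : Matrix (Fin 2) (Fin 2) ℤ) ^ n).mulVec v) := by
  induction n with
  | zero => simp
  | succ n ih =>
    rw [zpowersHom_apply, toAdd_ofAdd, zpow_natCast] at ih ⊢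
    rw [pow_succ', pow_succ', MulAut.mul_apply, ih, ← Matrix.mulVec_mulVec]
    rfl

theorem mem_zSqSubgroup_iff {Θ : GL (Fin 2) ℤ} {x : piTheta Θ} :
    x ∈ zSqSubgroup Θ ↔ x.right = 1 := by
  rw [zSqSubgroup, SemidirectProduct.range_inl_eq_ker_rightHom, MonoidHom.mem_ker,
    SemidirectProduct.rightHom_eq_right]

theorem exists_mem_right_eq_natCast_of_not_mem_zSqSubgroup {Θ : GL (Fin 2) ℤ}
    {N : Subgroup (piTheta Θ)} {x : piTheta Θ} (hx : x ∈ N) (hxA : x ∉ zSqSubgroup Θ) :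
    ∃ y ∈ N, ∃ n : ℕ, n ≠ 0 ∧ y.right = Multiplicative.ofAdd (n : ℤ) := by
  rw [mem_zSqSubgroup_iff] at hxA
  obtain ⟨n, hn | hn⟩ := Int.eq_nat_or_neg (Multiplicative.toAdd x.right)
  · refine ⟨x, hx, n, ?_, by rw [← hn]; rfl⟩
    rintro rfl
    exact hxA (toAdd_eq_zero.mp hn)
  · refine ⟨x⁻¹, N.inv_mem hx, n, ?_, ?_⟩
    · rintro rfl
      exact hxA (toAdd_eq_zero.mp hn)
    · rw [SemidirectProduct.inv_right, ← ofAdd_toAdd x.right, hn, ofAdd_neg, inv_inv]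

theorem pow_sub_one_sq_eq_zero_of_mem {Θ : GL (Fin 2) ℤ} {N : Subgroup (piTheta Θ)}
    (hN : N.Normal) (hcomm : ∀ x ∈ N, ∀ y ∈ N, x * y = y * x) {x : piTheta Θ} (hx : x ∈ N)
    {n : ℕ} (hxn : x.right = Multiplicative.ofAdd (n : ℤ)) :
    ((Θ : Matrix (Fin 2) (Fin 2) ℤ) ^ n - 1) ^ 2 = 0 := by
  refine Matrix.ext_iff_mulVec.mpr fun w => ?_
  have hfix := SemidirectProduct.map_right_div_eq_of_commute_conj
    (hcomm x hx _ (hN.conj_mem x hx (SemidirectProduct.inl (Multiplicative.ofAdd w))))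
  rw [hxn, zpowersHom_thetaAddAut_natCast_apply, ← ofAdd_sub,
    zpowersHom_thetaAddAut_natCast_apply] at hfix
  replace hfix := congrArg Multiplicative.toAdd hfix
  simp only [toAdd_ofAdd] at hfix
  rw [sq, ← Matrix.mulVec_mulVec, Matrix.zero_mulVec]
  simp only [Matrix.sub_mulVec, Matrix.one_mulVec, Matrix.mulVec_sub] at hfix ⊢
  linear_combination (norm := module) -hfix

/-- if `Θ ∈ GL(2,ℤ)` is hyperbolic (no eigenvalue a root of unity;
equivalently `det Θ = 1` and `|tr Θ| > 2`, or `det Θ = −1` and `tr Θ ≠ 0`), then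
every abelian normal subgroup of `π_Θ = ℤ² ⋊_Θ ℤ` is contained in `A = ℤ² × {0}`;
consequently `A` (which is abelian and normal) is the unique maximal abelian
normal subgroup of `π_Θ`. -/
theorem stmt15 (Θ : GL (Fin 2) ℤ)
    (hhyp : ((Θ : Matrix (Fin 2) (Fin 2) ℤ).det = 1 ∧
        2 < |(Θ : Matrix (Fin 2) (Fin 2) ℤ).trace|) ∨
      ((Θ : Matrix (Fin 2) (Fin 2) ℤ).det = -1 ∧
        (Θ : Matrix (Fin 2) (Fin 2) ℤ).trace ≠ 0)) :
    (∀ N : Subgroup (piTheta Θ), N.Normal → (∀ x ∈ N, ∀ y ∈ N, x * y = y * x) →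
      N ≤ zSqSubgroup Θ) ∧
    (zSqSubgroup Θ).Normal ∧
    (∀ x ∈ zSqSubgroup Θ, ∀ y ∈ zSqSubgroup Θ, x * y = y * x) := by
  refine ⟨fun N hN hcomm x hx => ?_, ?_, ?_⟩
  · by_contra hxA
    obtain ⟨y, hy, n, hn, hyn⟩ := exists_mem_right_eq_natCast_of_not_mem_zSqSubgroup hx hxA
    apply Matrix.det_pow_sub_one_ne_zero_of_hyperbolic _ hhyp hn
    simpa [Matrix.det_pow] using
      congrArg Matrix.det (pow_sub_one_sq_eq_zero_of_mem hN hcomm hy hyn)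
  · rw [zSqSubgroup, SemidirectProduct.range_inl_eq_ker_rightHom]
    exact MonoidHom.normal_ker _
  · rintro - ⟨a, rfl⟩ - ⟨b, rfl⟩
    rw [← map_mul, ← map_mul, mul_comm]
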